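/- Let π : E → M be a vector bundle with nonlinear connection Hor. The following are equivalent: (1) the linearized connection on π*E is flat (curvature tensor vanishes identically); (2) the set of Hor-basic vector fields (vector fields of the form X^H + η^∨ with X ∈ 𝔛(M), η ∈ Sec(E)) is closed under Lie bracket; (3) for all Hor-basic Y₁, Y₂ the section κ([Y₁,Y₂]) along π is basic; (4) for all X₁, X₂ ∈ 𝔛(M) and η₁, η₂ ∈ Sec(E), the section R(X₁,X₂) + D_{X₁^H}η₂ − D_{X₂^H}η₁ along π is basic. -/

import Mathlib

/- Local model: `E = M × V`, nonlinear connection with horizontal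
coefficient `γ`, horizontal lift `X^H(m,y) = (X m, γ m y (X m))`, vertical lift
`η^∨(m,y) = (0, η m)`, connector `κ`, covariant derivative `D` and curvature of the
linearized connection, and curvature `R` of the nonlinear connection. -/

section Lin
variable {M V : Type*} [NormedAddCommGroup M] [NormedSpace ℝ M]
  [NormedAddCommGroup V] [NormedSpace ℝ V]

noncomputable def lieBkt (X Y : M × V → M × V) : M × V → M × V :=
  fun p => fderiv ℝ Y p (X p) - fderiv ℝ X p (Y p)

def hLift (γ : M → V → M → V) (X : M → M) : M × V → M × V :=
  fun p => (X p.1, γ p.1 p.2 (X p.1))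

def vLift (η : M → V) : M × V → M × V := fun p => ((0 : M), η p.1)

def connector (γ : M → V → M → V) (W : M × V → M × V) : M × V → V :=
  fun p => (W p).2 - γ p.1 p.2 (W p).1

noncomputable def covD (γ : M → V → M → V) (W : M × V → M × V) (σ : M × V → V) :
    M × V → V :=
  fun p => fderiv ℝ σ p (W p) - (fderiv ℝ (fun y' => γ p.1 y' (W p).1) p.2) (σ p)

noncomputable def curvLin (γ : M → V → M → V) (Y₁ Y₂ : M × V → M × V)
    (σ : M × V → V) : M × V → V :=
  fun p => covD γ Y₁ (covD γ Y₂ σ) p - covD γ Y₂ (covD γ Y₁ σ) p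
    - covD γ (lieBkt Y₁ Y₂) σ p

noncomputable def curvHor (γ : M → V → M → V) (X₁ X₂ : M → M) : M × V → V :=
  connector γ (lieBkt (hLift γ X₁) (hLift γ X₂))

/-- A section along `π` is basic if it is the pullback of a section of `E`. -/
def IsBasicSec (s : M × V → V) : Prop := ∃ α : M → V, ∀ p, s p = α p.1

/-- A vector field on `E` is Hor-basic if it is of the form `X^H + η^∨` with
`X ∈ 𝔛(M)` and `η ∈ Sec(E)` (smooth). -/
def IsHorBasic (γ : M → V → M → V) (Y : M × V → M × V) : Prop :=
  ∃ (X : M → M) (η : M → V), ContDiff ℝ (⊤ : ℕ∞) X ∧ ContDiff ℝ (⊤ : ℕ∞) η ∧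
    ∀ p, Y p = hLift γ X p + vLift η p

/-!
For Hor-basic fields `Yᵢ = Xᵢ^H + ηᵢ^∨` a direct computation gives `Curv(Y₁, Y₂) = -∂_y κ([Y₁, Y₂])`,
so flatness makes `κ([Y₁, Y₂])` basic. This section is the one in (4), and since the base part of
`[Y₁, Y₂]` is `[X₁, X₂]`, the bracket is Hor-basic exactly when `κ([Y₁, Y₂])` is basic.
Conversely, the curvature at `p` depends only on `Y₁ p`, `Y₂ p`, `σ p` and the base parts of
`dY₁ (Y₂ p)`, `dY₂ (Y₁ p)` (`curvJet`). Affine Hor-basic fields realise all such data in which the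
base parts of `Y₁ p` and `Y₂ p` are nonzero; these data are dense, so the curvature vanishes.
-/

open scoped ContDiff

namespace LinearizedConnection

variable {γ : M → V → M → V}

def vertIncl : V →L[ℝ] M × V × M :=
  (0 : V →L[ℝ] M).prod ((ContinuousLinearMap.id ℝ V).prod 0)

@[simp] lemma vertIncl_apply (v : V) : vertIncl (M := M) v = (0, v, 0) := rfl

variable (γ) in
noncomputable def dCoeff : M × V × M → (M × V × M) →L[ℝ] V :=
  fderiv ℝ (fun z : M × V × M => γ z.1 z.2.1 z.2.2)

variable (γ) in
noncomputable def d2Coeff : M × V × M → (M × V × M) →L[ℝ] (M × V × M) →L[ℝ] V :=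
  fderiv ℝ (dCoeff γ)

variable (γ) in
noncomputable def fibreDeriv (z : M × V × M) : V →L[ℝ] V := (dCoeff γ z).comp vertIncl

@[simp] lemma fibreDeriv_apply (z : M × V × M) (v : V) :
    fibreDeriv γ z v = dCoeff γ z (0, v, 0) := rfl

variable (γ) in
def horBasic (X : M → M) (η : M → V) : M × V → M × V := hLift γ X + vLift η

omit [NormedSpace ℝ M] [NormedSpace ℝ V] in
lemma horBasic_apply (X : M → M) (η : M → V) (p : M × V) :
    horBasic γ X η p = (X p.1, γ p.1 p.2 (X p.1) + η p.1) := by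
  simp [horBasic, hLift, vLift]

lemma isHorBasic_horBasic {X : M → M} {η : M → V} (hX : ContDiff ℝ ∞ X) (hη : ContDiff ℝ ∞ η) :
    IsHorBasic γ (horBasic γ X η) :=
  ⟨X, η, hX, hη, fun _ => rfl⟩

lemma isHorBasic_iff {Y : M × V → M × V} :
    IsHorBasic γ Y ↔ ∃ X η, ContDiff ℝ ∞ X ∧ ContDiff ℝ ∞ η ∧ Y = horBasic γ X η := by
  simp only [IsHorBasic, funext_iff, horBasic, Pi.add_apply]

lemma IsHorBasic.isBasicSec_connector {W : M × V → M × V} (hW : IsHorBasic γ W) :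
    IsBasicSec (connector γ W) := by
  obtain ⟨X, η, -, -, hW⟩ := hW
  exact ⟨η, fun p => by simp [connector, hW p, hLift, vLift]⟩

omit [NormedAddCommGroup M] [NormedSpace ℝ M] in
lemma isBasicSec_iff_forall_eq_zero {s : M × V → V} {Φ : M × V → V →L[ℝ] V}
    (hs : ∀ m y, HasFDerivAt (fun y' => s (m, y')) (Φ (m, y)) y) :
    IsBasicSec s ↔ ∀ p, Φ p = 0 := by
  constructor
  · rintro ⟨α, hα⟩ ⟨m, y⟩
    have hconst : (fun y' => s (m, y')) = fun _ => α m := funext fun y' => hα (m, y')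
    exact (hs m y).unique (hconst ▸ hasFDerivAt_const _ _)
  · intro h
    refine ⟨fun m => s (m, 0), fun ⟨m, y⟩ => ?_⟩
    exact is_const_of_fderiv_eq_zero (fun y' => (hs m y').differentiableAt)
      (fun y' => by rw [(hs m y').fderiv, h]) y 0

lemma exists_clm_apply_eq {E F : Type*} [NormedAddCommGroup E] [NormedSpace ℝ E]
    [NormedAddCommGroup F] [NormedSpace ℝ F] {u : E} {ξ : F} (h : u ≠ 0 ∨ ξ = 0) :
    ∃ L : E →L[ℝ] F, L u = ξ := by
  rcases h with hu | rfl
  · obtain ⟨f, hf⟩ := SeparatingDual.exists_eq_one (R := ℝ) hu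
    exact ⟨f.smulRight ξ, by simp [hf]⟩
  · exact ⟨0, rfl⟩

variable (γ) in
noncomputable def curvJet (p a b : M × V) (ξ₁ ξ₂ : M) : V →L[ℝ] V :=
  (d2Coeff γ (p.1, p.2, a.1) (b.1, b.2, ξ₁) - d2Coeff γ (p.1, p.2, b.1) (a.1, a.2, ξ₂)).comp vertIncl
    + ⁅fibreDeriv γ (p.1, p.2, a.1), fibreDeriv γ (p.1, p.2, b.1)⁆ + fibreDeriv γ (p.1, p.2, ξ₂ - ξ₁)

variable (γ) in
noncomputable def curvAt (Y₁ Y₂ : M × V → M × V) (p : M × V) : V →L[ℝ] V :=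
  curvJet γ p (Y₁ p) (Y₂ p) (fderiv ℝ Y₁ p (Y₂ p)).1 (fderiv ℝ Y₂ p (Y₁ p)).1

lemma hasFDerivAt_fibreIncl (m x : M) (y : V) :
    HasFDerivAt (fun y' : V => ((m, y', x) : M × V × M)) vertIncl y :=
  (hasFDerivAt_const m y).prodMk ((hasFDerivAt_id y).prodMk (hasFDerivAt_const x y))

section Smooth

variable (hγ : ContDiff ℝ ∞ (fun z : M × V × M => γ z.1 z.2.1 z.2.2))
include hγ

lemma contDiff_dCoeff : ContDiff ℝ ∞ (dCoeff γ) := hγ.fderiv_right (by simp)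

lemma contDiff_d2Coeff : ContDiff ℝ ∞ (d2Coeff γ) :=
  (contDiff_dCoeff hγ).fderiv_right (by simp)

lemma d2Coeff_comm (z a b : M × V × M) : d2Coeff γ z a b = d2Coeff γ z b a :=
  second_derivative_symmetric (fun z' => (hγ.differentiable (by simp) z').hasFDerivAt)
    ((contDiff_dCoeff hγ).differentiable (by simp) z).hasFDerivAt a b

lemma hasFDerivAt_fibreDeriv (m x : M) (y : V) :
    HasFDerivAt (fun y' => γ m y' x) (fibreDeriv γ (m, y, x)) y :=
  (hγ.differentiable (by simp) _).hasFDerivAt.comp y (hasFDerivAt_fibreIncl m x y)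

lemma hasFDerivAt_dCoeff_fibre (m x u ξ : M) (c y : V) :
    HasFDerivAt (fun y' => dCoeff γ (m, y', x) (u, γ m y' u + c, ξ))
      ((dCoeff γ (m, y, x)).comp (vertIncl.comp (fibreDeriv γ (m, y, u)))
        + ((d2Coeff γ (m, y, x)).comp vertIncl).flip (u, γ m y u + c, ξ)) y := by
  convert ((contDiff_dCoeff hγ).differentiable (by simp) _).hasFDerivAt.comp y
    (hasFDerivAt_fibreIncl m x y) |>.clm_apply
      ((hasFDerivAt_const u y).prodMk
        (((hasFDerivAt_fibreDeriv hγ m u y).add_const c).prodMk (hasFDerivAt_const ξ y))) using 1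
  · rfl
  · ext v
    simp [d2Coeff]

lemma covD_eq (W : M × V → M × V) (σ : M × V → V) (p : M × V) :
    covD γ W σ p = fderiv ℝ σ p (W p) - fibreDeriv γ (p.1, p.2, (W p).1) (σ p) := by
  rw [covD, (hasFDerivAt_fibreDeriv hγ _ _ _).fderiv]

lemma fderiv_covD_apply {W : M × V → M × V} {σ : M × V → V} (hW : ContDiff ℝ ∞ W)
    (hσ : ContDiff ℝ ∞ σ) (p h : M × V) :
    fderiv ℝ (covD γ W σ) p h = fderiv ℝ σ p (fderiv ℝ W p h) + fderiv ℝ (fderiv ℝ σ) p h (W p)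
      - fibreDeriv γ (p.1, p.2, (W p).1) (fderiv ℝ σ p h)
      - d2Coeff γ (p.1, p.2, (W p).1) (h.1, h.2, (fderiv ℝ W p h).1) (vertIncl (σ p)) := by
  have hW' := (hW.differentiable (by simp) p).hasFDerivAt
  have hσ' := (hσ.differentiable (by simp) p).hasFDerivAt
  have hdσ := ((hσ.fderiv_right (m := ∞) (by simp)).differentiable (by simp) p).hasFDerivAt
  have hdC := ((contDiff_dCoeff hγ).differentiable (by simp) (p.1, p.2, (W p).1)).hasFDerivAt.comp p
    (hasFDerivAt_fst.prodMk (hasFDerivAt_snd.prodMk hW'.fst))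
  have hvσ : HasFDerivAt (fun q => vertIncl (M := M) (σ q)) (vertIncl.comp (fderiv ℝ σ p)) p :=
    (vertIncl (M := M) (V := V)).hasFDerivAt.comp p hσ'
  have hcovD : HasFDerivAt (fun q => fderiv ℝ σ q (W q) - fibreDeriv γ (q.1, q.2, (W q).1) (σ q))
      _ p := (hdσ.clm_apply hW').sub (hdC.clm_apply hvσ)
  rw [funext (covD_eq hγ W σ), hcovD.fderiv]
  simp only [Function.comp_apply, ContinuousLinearMap.coe_coe, vertIncl_apply, sub_apply, add_apply,
    ContinuousLinearMap.comp_apply, ContinuousLinearMap.flip_apply, ContinuousLinearMap.prod_apply,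
    ContinuousLinearMap.coe_fst', ContinuousLinearMap.coe_snd', fibreDeriv_apply, d2Coeff]
  abel

lemma curvLin_eq {Y₁ Y₂ : M × V → M × V} {σ : M × V → V} (hY₁ : ContDiff ℝ ∞ Y₁)
    (hY₂ : ContDiff ℝ ∞ Y₂) (hσ : ContDiff ℝ ∞ σ) (p : M × V) :
    curvLin γ Y₁ Y₂ σ p = curvAt γ Y₁ Y₂ p (σ p) := by
  have hσ_symm : fderiv ℝ (fderiv ℝ σ) p (Y₁ p) (Y₂ p) = fderiv ℝ (fderiv ℝ σ) p (Y₂ p) (Y₁ p) :=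
    second_derivative_symmetric (fun q => (hσ.differentiable (by simp) q).hasFDerivAt)
      ((hσ.fderiv_right (m := ∞) (by simp)).differentiable (by simp) p).hasFDerivAt _ _
  simp only [curvLin, curvAt, curvJet, covD_eq hγ, fderiv_covD_apply hγ hY₁ hσ,
    fderiv_covD_apply hγ hY₂ hσ, lieBkt, hσ_symm, Ring.lie_def, map_sub,
    sub_apply, add_apply, mul_apply_eq_comp,
    ContinuousLinearMap.comp_apply, fibreDeriv_apply, vertIncl_apply, Prod.fst_sub]
  abel

lemma contDiff_connector {W : M × V → M × V} (hW : ContDiff ℝ ∞ W) :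
    ContDiff ℝ ∞ (connector γ W) :=
  hW.snd.sub (hγ.comp (contDiff_fst.prodMk (contDiff_snd.prodMk hW.fst)))

lemma contDiff_horBasic {X : M → M} {η : M → V} (hX : ContDiff ℝ ∞ X) (hη : ContDiff ℝ ∞ η) :
    ContDiff ℝ ∞ (horBasic γ X η) :=
  ((hX.comp contDiff_fst).prodMk
    (hγ.comp (contDiff_fst.prodMk (contDiff_snd.prodMk (hX.comp contDiff_fst))))).add
  (contDiff_const.prodMk (hη.comp contDiff_fst))

lemma fderiv_horBasic_apply {X : M → M} {η : M → V} (hX : ContDiff ℝ ∞ X)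
    (hη : ContDiff ℝ ∞ η) (p h : M × V) :
    fderiv ℝ (horBasic γ X η) p h =
      (fderiv ℝ X p.1 h.1, dCoeff γ (p.1, p.2, X p.1) (h.1, h.2, fderiv ℝ X p.1 h.1)
        + fderiv ℝ η p.1 h.1) := by
  have hX' := (hX.differentiable (by simp) p.1).hasFDerivAt.comp p hasFDerivAt_fst
  have hη' := (hη.differentiable (by simp) p.1).hasFDerivAt.comp p hasFDerivAt_fst
  have hγX := (hγ.differentiable (by simp) (p.1, p.2, X p.1)).hasFDerivAt.comp p
    (hasFDerivAt_fst.prodMk (hasFDerivAt_snd.prodMk hX'))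
  have hY : HasFDerivAt (horBasic γ X η) _ p :=
    (hX'.prodMk hγX).add ((hasFDerivAt_const (0 : M) p).prodMk hη')
  simp [hY.fderiv, dCoeff]

omit hγ in
lemma contDiff_lieBkt {Y₁ Y₂ : M × V → M × V} (hY₁ : ContDiff ℝ ∞ Y₁) (hY₂ : ContDiff ℝ ∞ Y₂) :
    ContDiff ℝ ∞ (lieBkt Y₁ Y₂) :=
  ((hY₂.fderiv_right (m := ∞) (by simp)).clm_apply hY₁).sub
    ((hY₁.fderiv_right (m := ∞) (by simp)).clm_apply hY₂)

lemma isHorBasic_of_isBasicSec_connector {W : M × V → M × V} (hW : ContDiff ℝ ∞ W)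
    (hfst : ∀ p, (W p).1 = (W (p.1, 0)).1) (hκ : IsBasicSec (connector γ W)) :
    IsHorBasic γ W := by
  obtain ⟨α, hα⟩ := hκ
  have hincl : ContDiff ℝ ∞ fun m : M => ((m, 0) : M × V) := contDiff_id.prodMk contDiff_const
  refine ⟨fun m => (W (m, 0)).1, fun m => connector γ W (m, 0), (hW.comp hincl).fst,
    (contDiff_connector hγ hW).comp hincl, fun p => ?_⟩
  have hsnd : (W p).2 = γ p.1 p.2 (W p).1 + connector γ W (p.1, 0) := by
    rw [hα, ← hα p, connector, add_sub_cancel]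
  ext
  · simp [hLift, vLift, ← hfst]
  · simp [hLift, vLift, ← hfst, hsnd]

section Bracket

variable {X₁ X₂ : M → M} {η₁ η₂ : M → V}
  (hX₁ : ContDiff ℝ ∞ X₁) (hX₂ : ContDiff ℝ ∞ X₂) (hη₁ : ContDiff ℝ ∞ η₁) (hη₂ : ContDiff ℝ ∞ η₂)
include hX₁ hX₂ hη₁ hη₂

lemma fst_lieBkt_horBasic (p : M × V) :
    (lieBkt (horBasic γ X₁ η₁) (horBasic γ X₂ η₂) p).1
      = fderiv ℝ X₂ p.1 (X₁ p.1) - fderiv ℝ X₁ p.1 (X₂ p.1) := by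
  simp [lieBkt, fderiv_horBasic_apply hγ hX₁ hη₁, fderiv_horBasic_apply hγ hX₂ hη₂, horBasic_apply]

lemma connector_lieBkt_horBasic (p : M × V) :
    connector γ (lieBkt (horBasic γ X₁ η₁) (horBasic γ X₂ η₂)) p
      = dCoeff γ (p.1, p.2, X₂ p.1)
            (X₁ p.1, γ p.1 p.2 (X₁ p.1) + η₁ p.1, fderiv ℝ X₂ p.1 (X₁ p.1))
        + fderiv ℝ η₂ p.1 (X₁ p.1)
        - dCoeff γ (p.1, p.2, X₁ p.1)
            (X₂ p.1, γ p.1 p.2 (X₂ p.1) + η₂ p.1, fderiv ℝ X₁ p.1 (X₂ p.1))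
        - fderiv ℝ η₁ p.1 (X₂ p.1)
        - γ p.1 p.2 (fderiv ℝ X₂ p.1 (X₁ p.1) - fderiv ℝ X₁ p.1 (X₂ p.1)) := by
  rw [connector, fst_lieBkt_horBasic hγ hX₁ hX₂ hη₁ hη₂]
  simp only [lieBkt, fderiv_horBasic_apply hγ hX₁ hη₁, fderiv_horBasic_apply hγ hX₂ hη₂,
    horBasic_apply, Prod.snd_sub]
  abel

lemma hasFDerivAt_connector_lieBkt_horBasic (m : M) (y : V) :
    HasFDerivAt (fun y' => connector γ (lieBkt (horBasic γ X₁ η₁) (horBasic γ X₂ η₂)) (m, y'))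
      (-curvAt γ (horBasic γ X₁ η₁) (horBasic γ X₂ η₂) (m, y)) y := by
  simp only [connector_lieBkt_horBasic hγ hX₁ hX₂ hη₁ hη₂]
  refine ((((hasFDerivAt_dCoeff_fibre hγ m (X₂ m) (X₁ m) _ (η₁ m) y).add_const _).sub
    (hasFDerivAt_dCoeff_fibre hγ m (X₁ m) (X₂ m) _ (η₂ m) y)).sub_const _).sub
    (hasFDerivAt_fibreDeriv hγ m _ y) |>.congr_fderiv ?_
  ext v
  simp only [curvAt, curvJet, horBasic_apply, fderiv_horBasic_apply hγ hX₁ hη₁,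
    fderiv_horBasic_apply hγ hX₂ hη₂, d2Coeff_comm hγ _ _ (0, v, 0), Ring.lie_def, sub_apply,
    add_apply, neg_apply, mul_apply_eq_comp, ContinuousLinearMap.comp_apply,
    ContinuousLinearMap.sub_comp, ContinuousLinearMap.flip_apply, fibreDeriv_apply,
    vertIncl_apply, neg_add_rev, neg_sub]
  abel

lemma isBasicSec_connector_lieBkt_horBasic_iff :
    IsBasicSec (connector γ (lieBkt (horBasic γ X₁ η₁) (horBasic γ X₂ η₂))) ↔
      ∀ p, curvAt γ (horBasic γ X₁ η₁) (horBasic γ X₂ η₂) p = 0 := by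
  simpa only [neg_eq_zero] using
    isBasicSec_iff_forall_eq_zero (Φ := fun p => -curvAt γ _ _ p)
      (hasFDerivAt_connector_lieBkt_horBasic hγ hX₁ hX₂ hη₁ hη₂)

lemma curvHor_add_covD_sub_covD :
    (fun p => curvHor γ X₁ X₂ p + covD γ (hLift γ X₁) (fun q => η₂ q.1) p
      - covD γ (hLift γ X₂) (fun q => η₁ q.1) p)
      = connector γ (lieBkt (horBasic γ X₁ η₁) (horBasic γ X₂ η₂)) := by
  have hLift_eq : ∀ X : M → M, hLift γ X = horBasic γ X (fun _ => 0) := fun X => by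
    ext p <;> simp [horBasic, vLift]
  have fderiv_basic : ∀ {η : M → V}, ContDiff ℝ ∞ η → ∀ p h,
      fderiv ℝ (fun q : M × V => η q.1) p h = fderiv ℝ η p.1 h.1 := fun {η} hη p h => by
    have hη' : HasFDerivAt (fun q : M × V => η q.1) _ p :=
      (hη.differentiable (by simp) p.1).hasFDerivAt.comp p hasFDerivAt_fst
    rw [hη'.fderiv]
    rfl
  have dCoeff_add : ∀ (z : M × V × M) (a : M) (b c : V) (ξ : M),
      dCoeff γ z (a, b + c, ξ) = dCoeff γ z (a, b, ξ) + fibreDeriv γ z c := fun z a b c ξ => by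
    rw [fibreDeriv_apply, ← map_add, Prod.mk_add_mk, Prod.mk_add_mk, add_zero, add_zero]
  ext p
  simp only [curvHor, hLift_eq, connector_lieBkt_horBasic hγ hX₁ hX₂ hη₁ hη₂,
    connector_lieBkt_horBasic hγ hX₁ hX₂ (contDiff_const (c := (0 : V))) contDiff_const, covD_eq hγ,
    fderiv_basic hη₁, fderiv_basic hη₂, horBasic_apply, dCoeff_add, add_zero,
    fderiv_fun_const, Pi.zero_apply, zero_apply]
  abel

end Bracket

lemma isHorBasic_lieBkt_of_isBasicSec {Y₁ Y₂ : M × V → M × V} (hY₁ : IsHorBasic γ Y₁)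
    (hY₂ : IsHorBasic γ Y₂) (hκ : IsBasicSec (connector γ (lieBkt Y₁ Y₂))) :
    IsHorBasic γ (lieBkt Y₁ Y₂) := by
  obtain ⟨X₁, η₁, hX₁, hη₁, rfl⟩ := isHorBasic_iff.1 hY₁
  obtain ⟨X₂, η₂, hX₂, hη₂, rfl⟩ := isHorBasic_iff.1 hY₂
  refine isHorBasic_of_isBasicSec_connector hγ
    (contDiff_lieBkt (contDiff_horBasic hγ hX₁ hη₁) (contDiff_horBasic hγ hX₂ hη₂)) (fun p => ?_) hκ
  simp only [fst_lieBkt_horBasic hγ hX₁ hX₂ hη₁ hη₂]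

lemma isBasicSec_connector_lieBkt_of_flat
    (hflat : ∀ (Y₁ Y₂ : M × V → M × V) (σ : M × V → V), ContDiff ℝ ∞ Y₁ → ContDiff ℝ ∞ Y₂ →
      ContDiff ℝ ∞ σ → ∀ p, curvLin γ Y₁ Y₂ σ p = 0)
    {Y₁ Y₂ : M × V → M × V} (hY₁ : IsHorBasic γ Y₁) (hY₂ : IsHorBasic γ Y₂) :
    IsBasicSec (connector γ (lieBkt Y₁ Y₂)) := by
  obtain ⟨X₁, η₁, hX₁, hη₁, rfl⟩ := isHorBasic_iff.1 hY₁
  obtain ⟨X₂, η₂, hX₂, hη₂, rfl⟩ := isHorBasic_iff.1 hY₂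
  refine (isBasicSec_connector_lieBkt_horBasic_iff hγ hX₁ hX₂ hη₁ hη₂).2 fun p => ?_
  ext v
  rw [← curvLin_eq hγ (contDiff_horBasic hγ hX₁ hη₁) (contDiff_horBasic hγ hX₂ hη₂)
    (contDiff_const (c := v)) p]
  exact hflat _ _ _ (contDiff_horBasic hγ hX₁ hη₁) (contDiff_horBasic hγ hX₂ hη₂) contDiff_const p

omit hγ in
lemma exists_horBasic_eq (p a : M × V) {u ξ : M} (h : u ≠ 0 ∨ ξ = 0) :
    ∃ X η, ContDiff ℝ ∞ X ∧ ContDiff ℝ ∞ η ∧ horBasic γ X η p = a ∧ fderiv ℝ X p.1 u = ξ := by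
  obtain ⟨L, hL⟩ := exists_clm_apply_eq h
  refine ⟨fun m => a.1 + L (m - p.1), fun _ => a.2 - γ p.1 p.2 a.1,
    contDiff_const.add (L.contDiff.comp (contDiff_id.sub contDiff_const)), contDiff_const, ?_, ?_⟩
  · simp [horBasic_apply]
  · have hX : HasFDerivAt (fun m => a.1 + L (m - p.1)) L p.1 :=
      (L.hasFDerivAt.comp p.1 ((hasFDerivAt_id p.1).sub_const p.1)).const_add a.1
    rw [hX.fderiv, hL]

lemma curvJet_eq_zero_of_nondegenerate (p : M × V)
    (h : ∀ a b ξ₁ ξ₂, (b.1 ≠ 0 ∨ ξ₁ = 0) → (a.1 ≠ 0 ∨ ξ₂ = 0) → curvJet γ p a b ξ₁ ξ₂ = 0)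
    (a b : M × V) (ξ₁ ξ₂ : M) : curvJet γ p a b ξ₁ ξ₂ = 0 := by
  rcases subsingleton_or_nontrivial M with hM | hM
  · exact h a b ξ₁ ξ₂ (Or.inr (Subsingleton.elim _ _)) (Or.inr (Subsingleton.elim _ _))
  have hdC := (contDiff_dCoeff hγ).continuous
  have hd2C := (contDiff_d2Coeff hγ).continuous
  have hcont : Continuous fun u : M × M => curvJet γ p (u.1, a.2) (u.2, b.2) ξ₁ ξ₂ := by
    simp only [curvJet, fibreDeriv, Ring.lie_def]
    fun_prop
  have hdense : Dense ({0}ᶜ ×ˢ {0}ᶜ : Set (M × M)) :=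
    (dense_compl_singleton 0).prod (dense_compl_singleton 0)
  have hzero := hcont.ext_on hdense continuous_const
    fun u hu => h _ _ _ _ (Or.inl hu.2) (Or.inl hu.1)
  simpa using congrFun hzero (a.1, b.1)

lemma curvJet_eq_zero_of_isBasicSec
    (hκ : ∀ Y₁ Y₂ : M × V → M × V, IsHorBasic γ Y₁ → IsHorBasic γ Y₂ →
      IsBasicSec (connector γ (lieBkt Y₁ Y₂)))
    (p a b : M × V) (ξ₁ ξ₂ : M) : curvJet γ p a b ξ₁ ξ₂ = 0 := by
  refine curvJet_eq_zero_of_nondegenerate hγ p (fun a b ξ₁ ξ₂ h₁ h₂ => ?_) a b ξ₁ ξ₂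
  obtain ⟨X₁, η₁, hX₁, hη₁, ha, hξ₁⟩ := exists_horBasic_eq (γ := γ) p a h₁
  obtain ⟨X₂, η₂, hX₂, hη₂, hb, hξ₂⟩ := exists_horBasic_eq (γ := γ) p b h₂
  have hcurv := (isBasicSec_connector_lieBkt_horBasic_iff hγ hX₁ hX₂ hη₁ hη₂).1
    (hκ _ _ (isHorBasic_horBasic hX₁ hη₁) (isHorBasic_horBasic hX₂ hη₂)) p
  simpa [curvAt, fderiv_horBasic_apply hγ hX₁ hη₁, fderiv_horBasic_apply hγ hX₂ hη₂, ha, hb, hξ₁, hξ₂]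
    using hcurv

end Smooth

end LinearizedConnection

open LinearizedConnection in
/-- the following are equivalent: (1) the linearized connection is flat;
(2) the Hor-basic vector fields are closed under Lie bracket; (3) `κ([Y₁,Y₂])` is basic
for all Hor-basic `Y₁, Y₂`; (4) `R(X₁,X₂) + D_{X₁^H}η₂ - D_{X₂^H}η₁` is basic for all
`X₁, X₂ ∈ 𝔛(M)` and `η₁, η₂ ∈ Sec(E)`. -/
theorem linearized_connection_flat_tfae
    (γ : M → V → M → V)
    (hγ : ContDiff ℝ (⊤ : ℕ∞) (fun p : M × V × M => γ p.1 p.2.1 p.2.2)) :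
    List.TFAE
      [ (∀ (Y₁ Y₂ : M × V → M × V) (σ : M × V → V),
          ContDiff ℝ (⊤ : ℕ∞) Y₁ → ContDiff ℝ (⊤ : ℕ∞) Y₂ →
          ContDiff ℝ (⊤ : ℕ∞) σ → ∀ p, curvLin γ Y₁ Y₂ σ p = 0),
        (∀ Y₁ Y₂ : M × V → M × V, IsHorBasic γ Y₁ → IsHorBasic γ Y₂ →
          IsHorBasic γ (lieBkt Y₁ Y₂)),
        (∀ Y₁ Y₂ : M × V → M × V, IsHorBasic γ Y₁ → IsHorBasic γ Y₂ →
          IsBasicSec (connector γ (lieBkt Y₁ Y₂))),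
        (∀ (X₁ X₂ : M → M) (η₁ η₂ : M → V),
          ContDiff ℝ (⊤ : ℕ∞) X₁ → ContDiff ℝ (⊤ : ℕ∞) X₂ →
          ContDiff ℝ (⊤ : ℕ∞) η₁ → ContDiff ℝ (⊤ : ℕ∞) η₂ →
          IsBasicSec (fun p => curvHor γ X₁ X₂ p
            + covD γ (hLift γ X₁) (fun q => η₂ q.1) p
            - covD γ (hLift γ X₂) (fun q => η₁ q.1) p)) ] := by
  tfae_have 1 → 3 := fun hflat _ _ => isBasicSec_connector_lieBkt_of_flat hγ hflat
  tfae_have 3 → 1 := fun hκ Y₁ Y₂ σ hY₁ hY₂ hσ p => by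
    rw [curvLin_eq hγ hY₁ hY₂ hσ p, curvAt, curvJet_eq_zero_of_isBasicSec hγ hκ, zero_apply]
  tfae_have 2 → 3 := fun hbkt Y₁ Y₂ hY₁ hY₂ => (hbkt Y₁ Y₂ hY₁ hY₂).isBasicSec_connector
  tfae_have 3 → 2 := fun hκ Y₁ Y₂ hY₁ hY₂ =>
    isHorBasic_lieBkt_of_isBasicSec hγ hY₁ hY₂ (hκ Y₁ Y₂ hY₁ hY₂)
  tfae_have 3 → 4 := fun hκ X₁ X₂ η₁ η₂ hX₁ hX₂ hη₁ hη₂ => by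
    rw [curvHor_add_covD_sub_covD hγ hX₁ hX₂ hη₁ hη₂]
    exact hκ _ _ (isHorBasic_horBasic hX₁ hη₁) (isHorBasic_horBasic hX₂ hη₂)
  tfae_have 4 → 3 := fun h4 Y₁ Y₂ hY₁ hY₂ => by
    obtain ⟨X₁, η₁, hX₁, hη₁, rfl⟩ := isHorBasic_iff.1 hY₁
    obtain ⟨X₂, η₂, hX₂, hη₂, rfl⟩ := isHorBasic_iff.1 hY₂
    rw [← curvHor_add_covD_sub_covD hγ hX₁ hX₂ hη₁ hη₂]
    exact h4 X₁ X₂ η₁ η₂ hX₁ hX₂ hη₁ hη₂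
  tfae_finish

end Lin
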